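/- arXiv:2402.08306 — 3 statements merged into one kernel-verified Lean document; each statement's English description precedes it below -/
import Mathlib

section
/- Let n be a finite nonempty index type, let M be a symmetric invertible real n×n matrix, and let g be a real n×n matrix. Then the quadratic form of M⁻¹gᵀ is positive (i.e., vᵀ(M⁻¹gᵀ)v > 0 for every nonzero v ∈ ℝⁿ) if and only if the quadratic form of gᵀM is positive (i.e., wᵀ(gᵀM)w > 0 for every nonzero w ∈ ℝⁿ). -/
open Matrix

/-- For a symmetric invertible real matrix `M` and a real matrix `g`, the quadratic form of
`M⁻¹ * gᵀ` is positive iff the quadratic form of `gᵀ * M` is positive. -/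
theorem stmt_0 {n : Type*} [Fintype n] [Nonempty n] [DecidableEq n]
    (M g : Matrix n n ℝ) (hMsymm : M.IsSymm) (hMinv : IsUnit M.det) :
    (∀ v : n → ℝ, v ≠ 0 → 0 < v ⬝ᵥ ((M⁻¹ * gᵀ) *ᵥ v)) ↔
      (∀ w : n → ℝ, w ≠ 0 → 0 < w ⬝ᵥ ((gᵀ * M) *ᵥ w)) := by
  have hMs : Mᵀ = M := hMsymm
  have key : ∀ w : n → ℝ, (M *ᵥ w) ⬝ᵥ ((M⁻¹ * gᵀ) *ᵥ (M *ᵥ w)) = w ⬝ᵥ ((gᵀ * M) *ᵥ w) := by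
    intro w
    rw [mulVec_mulVec]
    nth_rewrite 1 [← hMs]
    rw [mulVec_transpose, dotProduct_mulVec, dotProduct_mulVec, vecMul_vecMul]
    congr 1
    rw [← Matrix.mul_assoc, ← Matrix.mul_assoc, Matrix.mul_nonsing_inv _ hMinv, Matrix.one_mul]
  constructor
  · intro h w hw
    have hv : M *ᵥ w ≠ 0 := by
      intro h0
      apply hw
      have := congrArg (fun x => M⁻¹ *ᵥ x) h0
      simpa [mulVec_mulVec, Matrix.nonsing_inv_mul _ hMinv] using this
    have := h (M *ᵥ w) hv
    rwa [key] at this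
  · intro h v hv
    have hw : M⁻¹ *ᵥ v ≠ 0 := by
      intro h0
      apply hv
      have := congrArg (fun x => M *ᵥ x) h0
      simpa [mulVec_mulVec, Matrix.mul_nonsing_inv _ hMinv] using this
    have := h (M⁻¹ *ᵥ v) hw
    rw [← key] at this
    rwa [mulVec_mulVec, Matrix.mul_nonsing_inv _ hMinv, one_mulVec] at this
end

section
/- Let n and m be finite index types with n nonempty. Let M be a symmetric positive definite real n×n matrix and g a real n×n matrix such that gᵀM + (gᵀM)ᵀ is positive definite. Let B be the block diagonal matrix with upper-left block M⁻¹gᵀ, lower-right block the m×m identity matrix, and zero off-diagonal blocks. Then vᵀBv > 0 for every nonzero v ∈ ℝⁿ⁺ᵐ. -/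
/-!
Write `x ↦ xᵀ A x` for the quadratic form of a (not necessarily symmetric) matrix `A`. It only
sees the symmetric part of `A`, so positivity of `gᵀM + (gᵀM)ᵀ` makes the form of `gᵀM` positive.
For symmetric invertible `M` we have `M⁻¹gᵀ = (M⁻¹)ᵀ (gᵀM) M⁻¹`, a congruence by an invertible
matrix, which preserves positivity. Finally the form of `diag(M⁻¹gᵀ, 1)` is the sum of the forms
of its two blocks.
-/

open Matrix

namespace QuadraticMap

theorem PosDef.comp {R M M' N : Type*} [CommSemiring R] [AddCommMonoid M] [Module R M]
    [AddCommMonoid M'] [Module R M'] [PartialOrder N] [AddCommMonoid N] [Module R N]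
    {Q : QuadraticMap R M N} (hQ : Q.PosDef) {f : M' →ₗ[R] M} (hf : Function.Injective f) :
    (Q.comp f).PosDef :=
  fun x hx => hQ (f x) ((map_ne_zero_iff f hf).mpr hx)

theorem PosDef.of_add_self {R M N : Type*} [CommSemiring R] [AddCommMonoid M] [Module R M]
    [AddCommMonoid N] [LinearOrder N] [IsOrderedAddMonoid N] [Module R N]
    {Q : QuadraticMap R M N} (hQ : (Q + Q).PosDef) : Q.PosDef :=
  fun x hx => by simpa using hQ x hx

end QuadraticMap

namespace Matrix

variable {R n m : Type*} [CommRing R] [Fintype n] [DecidableEq n] [Fintype m] [DecidableEq m]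

theorem toQuadraticForm'_apply (A : Matrix n n R) (x : n → R) :
    A.toQuadraticForm' x = x ⬝ᵥ A *ᵥ x :=
  toLinearMap₂'_apply' A x x

theorem toQuadraticForm'_add (A B : Matrix n n R) :
    (A + B).toQuadraticForm' = A.toQuadraticForm' + B.toQuadraticForm' := by
  ext x
  simp only [_root_.add_apply, toQuadraticForm'_apply, add_mulVec, dotProduct_add]

theorem toQuadraticForm'_transpose (A : Matrix n n R) :
    Aᵀ.toQuadraticForm' = A.toQuadraticForm' := by
  ext x
  rw [toQuadraticForm'_apply, toQuadraticForm'_apply, mulVec_transpose, dotProduct_comm,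
    dotProduct_mulVec]

theorem toQuadraticForm'_transpose_mul_mul (A : Matrix n n R) (P : Matrix n m R) :
    (Pᵀ * A * P).toQuadraticForm' = A.toQuadraticForm'.comp P.mulVecLin := by
  ext x
  rw [QuadraticMap.comp_apply, toQuadraticForm'_apply, toQuadraticForm'_apply, mulVecLin_apply,
    ← mulVec_mulVec, ← mulVec_mulVec, dotProduct_mulVec, vecMul_transpose]

theorem toQuadraticForm'_fromBlocks_zero (A : Matrix n n R) (D : Matrix m m R) :
    (fromBlocks A 0 0 D).toQuadraticForm' =
      (A.toQuadraticForm'.prod D.toQuadraticForm').comp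
        (LinearEquiv.sumArrowLequivProdArrow n m R R).toLinearMap := by
  ext v
  rw [QuadraticMap.comp_apply, QuadraticMap.prod_apply, toQuadraticForm'_apply,
    toQuadraticForm'_apply, toQuadraticForm'_apply, ← Sum.elim_comp_inl_inr v, fromBlocks_mulVec,
    sumElim_dotProduct_sumElim]
  simp only [zero_mulVec, add_zero, zero_add, Sum.elim_comp_inl, Sum.elim_comp_inr]
  rfl

theorem posDef_toQuadraticForm'_of_posDef_add_transpose [LinearOrder R] [IsOrderedRing R]
    [StarRing R] [TrivialStar R] {A : Matrix n n R} (h : (A + Aᵀ).PosDef) :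
    A.toQuadraticForm'.PosDef := by
  have hsum := h.toQuadraticForm'
  rw [toQuadraticForm'_add, toQuadraticForm'_transpose] at hsum
  exact hsum.of_add_self

theorem posDef_toQuadraticForm'_inv_mul [PartialOrder R] {M A : Matrix n n R} (hM : M.IsSymm)
    (hMunit : IsUnit M) (h : (A * M).toQuadraticForm'.PosDef) :
    (M⁻¹ * A).toQuadraticForm'.PosDef := by
  have hcongr : M⁻¹ * A = M⁻¹ᵀ * (A * M) * M⁻¹ := by
    rw [transpose_nonsing_inv, hM.eq, Matrix.mul_assoc, Matrix.mul_assoc,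
      mul_nonsing_inv _ ((isUnit_iff_isUnit_det M).mp hMunit), Matrix.mul_one]
  rw [hcongr, toQuadraticForm'_transpose_mul_mul]
  exact h.comp (mulVec_injective_of_isUnit (isUnit_nonsing_inv_iff.mpr hMunit))

theorem posDef_toQuadraticForm'_fromBlocks_zero [PartialOrder R] [IsOrderedRing R]
    {A : Matrix n n R} {D : Matrix m m R}
    (hA : A.toQuadraticForm'.PosDef) (hD : D.toQuadraticForm'.PosDef) :
    (fromBlocks A 0 0 D).toQuadraticForm'.PosDef := by
  rw [toQuadraticForm'_fromBlocks_zero]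
  exact (hA.prod hD).comp (LinearEquiv.injective _)

end Matrix

theorem stmt_6_general {n m : Type*} [Fintype n] [DecidableEq n]
    [Fintype m] [DecidableEq m]
    (M g : Matrix n n ℝ) (hM : M.PosDef)
    (h : (gᵀ * M + (gᵀ * M)ᵀ).PosDef) :
    ∀ v : n ⊕ m → ℝ, v ≠ 0 →
      0 < v ⬝ᵥ ((Matrix.fromBlocks (M⁻¹ * gᵀ) 0 0 (1 : Matrix m m ℝ)) *ᵥ v) := by
  have hMinvg : (M⁻¹ * gᵀ).toQuadraticForm'.PosDef :=
    posDef_toQuadraticForm'_inv_mul hM.isHermitian hM.isUnit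
      (posDef_toQuadraticForm'_of_posDef_add_transpose h)
  intro v hv
  simpa only [toQuadraticForm'_apply] using
    posDef_toQuadraticForm'_fromBlocks_zero hMinvg PosDef.one.toQuadraticForm' v hv

/-- If `M` is symmetric positive definite and `gᵀM + (gᵀM)ᵀ` is positive definite, then the
quadratic form of the block diagonal matrix `B = diag(M⁻¹gᵀ, 𝟙)` is positive. -/
theorem stmt_6 {n m : Type*} [Fintype n] [Nonempty n] [DecidableEq n]
    [Fintype m] [DecidableEq m]
    (M g : Matrix n n ℝ) (hM : M.PosDef)
    (h : (gᵀ * M + (gᵀ * M)ᵀ).PosDef) :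
    ∀ v : n ⊕ m → ℝ, v ≠ 0 →
      0 < v ⬝ᵥ ((Matrix.fromBlocks (M⁻¹ * gᵀ) 0 0 (1 : Matrix m m ℝ)) *ᵥ v) :=
  stmt_6_general M g hM h
end

section
/- Let m ∈ ℕ, let c > 0, P ≥ 0, λ ∈ [0,1), and T ∈ (0, ∞]. Let φ : ℝ → ℝ be differentiable with φ(t) ≥ c and |φ'(t)| ≤ P for all t ≥ 0, and let e : ℝ → ℝᵐ be differentiable on [0, T). Define e₁(t) := φ(t)·e(t). Assume ‖e₁(0)‖ < 1 and that for every t ∈ [0, T) with ‖e₁(t)‖ < 1 one has ‖ φ(t)·e'(t) + (1 − ‖e₁(t)‖²)⁻¹ · e₁(t) ‖ ≤ λ. Then ‖e₁(t)‖ < 1 for all t ∈ [0, T); equivalently, ‖e(t)‖ < 1/φ(t) for all t ∈ [0, T). -/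
/-!
`V = ‖e₁‖²` has derivative
`2⟪e₁, φ ė + φ' e⟫ = 2 (⟪e₁, e₂⟫ + (φ'/φ) V - V / (1 - V))`.
On a level set `V = ρ` the first two terms are at most `λ + P / c`, while the barrier term
`-ρ / (1 - ρ)` tends to `-∞` as `ρ → 1`. Choosing `ρ ∈ [V 0, 1)` with
`ρ / (1 - ρ) > λ + P / c`, `V` can never cross the level `ρ`, hence stays below `1`.
-/

open Set

local notation "⟪" x ", " y "⟫" => @inner ℝ _ _ x y

lemma exists_mem_Ico_lt_div_one_sub (K : ℝ) {a : ℝ} (ha : a < 1) :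
    ∃ ρ ∈ Ico a 1, K < ρ / (1 - ρ) := by
  set ρ := max a (1 - 1 / (|K| + 2))
  have hK : 0 < |K| + 2 := by positivity
  have hρ1 : ρ < 1 := max_lt ha (by simp only [sub_lt_self_iff]; positivity)
  have hgap : 1 - ρ ≤ 1 / (|K| + 2) := by linarith [le_max_right a (1 - 1 / (|K| + 2))]
  refine ⟨ρ, ⟨le_max_left _ _, hρ1⟩, ?_⟩
  have hinv : |K| + 2 ≤ 1 / (1 - ρ) := by
    rw [le_div_iff₀ (by linarith), mul_comm, ← le_div_iff₀ hK]
    exact hgap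
  have hsplit : ρ / (1 - ρ) = 1 / (1 - ρ) - 1 := by
    field_simp [(by linarith : (1 - ρ) ≠ 0)]
    ring
  linarith [le_abs_self K]

section InnerProductSpace

variable {E : Type*} [NormedAddCommGroup E] [InnerProductSpace ℝ E]

lemma norm_sq_le_of_inner_deriv_neg {f f' : ℝ → E} {a b ρ : ℝ}
    (hf : ∀ s ∈ Icc a b, HasDerivAt f (f' s) s) (ha : ‖f a‖ ^ 2 ≤ ρ)
    (hbd : ∀ s ∈ Ico a b, ‖f s‖ ^ 2 = ρ → ⟪f s, f' s⟫ < 0) :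
    ∀ s ∈ Icc a b, ‖f s‖ ^ 2 ≤ ρ := by
  have hV : ∀ s ∈ Icc a b, HasDerivAt (‖f ·‖ ^ 2) (2 * ⟪f s, f' s⟫) s :=
    fun s hs => (hf s hs).norm_sq
  intro s hs
  refine image_le_of_deriv_right_lt_deriv_boundary (B := fun _ => ρ) (B' := fun _ => 0)
    (fun s hs => (hV s hs).continuousAt.continuousWithinAt)
    (fun s hs => (hV s (Ico_subset_Icc_self hs)).hasDerivWithinAt) ha
    (fun _ => hasDerivAt_const _ _) (fun s hs hρ => ?_) hs
  linarith [hbd s hs hρ]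

lemma inner_smul_add_smul_le {x v : E} {a a' c P lam ρ : ℝ} (hc : 0 < c) (ha : c ≤ a)
    (ha' : |a'| ≤ P) (hρ : ‖a • x‖ ^ 2 = ρ) (hρ1 : ρ < 1)
    (hlam : ‖a • v + (1 - ρ)⁻¹ • (a • x)‖ ≤ lam) :
    ⟪a • x, a • v + a' • x⟫ ≤ lam + P / c - ρ / (1 - ρ) := by
  have ha0 : 0 < a := hc.trans_le ha
  have hax : (a * ‖x‖) ^ 2 = ρ := by rwa [norm_smul, Real.norm_eq_abs, abs_of_pos ha0] at hρ
  have hu1 : ‖a • x‖ ≤ 1 := (sq_le_one_iff₀ (norm_nonneg _)).1 (hρ ▸ hρ1.le)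
  have hbarrier : ⟪a • x, a • v + (1 - ρ)⁻¹ • (a • x)⟫ ≤ lam := calc
    _ ≤ ‖a • x‖ * ‖a • v + (1 - ρ)⁻¹ • (a • x)‖ := real_inner_le_norm _ _
    _ ≤ 1 * ‖a • v + (1 - ρ)⁻¹ • (a • x)‖ := by gcongr
    _ ≤ lam := by linarith
  have hxc : a * ‖x‖ ^ 2 ≤ 1 / c := by
    rw [le_div_iff₀ hc]
    calc a * ‖x‖ ^ 2 * c ≤ a * ‖x‖ ^ 2 * a := by gcongr
      _ = ρ := by rw [← hax]; ring
      _ ≤ 1 := hρ1.le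
  have hdrift : a' * (a * ‖x‖ ^ 2) ≤ P / c := calc
    a' * (a * ‖x‖ ^ 2) ≤ |a'| * (a * ‖x‖ ^ 2) := by gcongr; exact le_abs_self a'
    _ ≤ P * (1 / c) := by gcongr; exact (abs_nonneg a').trans ha'
    _ = P / c := by ring
  have hsplit : ⟪a • x, a • v + a' • x⟫ =
      ⟪a • x, a • v + (1 - ρ)⁻¹ • (a • x)⟫ - ρ / (1 - ρ)
        + a' * (a * ‖x‖ ^ 2) := by
    simp only [inner_add_right, real_inner_smul_right, real_inner_smul_left,
      real_inner_self_eq_norm_sq, hρ]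
    ring
  linarith

lemma norm_lt_one_div_of_norm_smul_lt_one {a : ℝ} {x : E} (ha : 0 < a) (h : ‖a • x‖ < 1) :
    ‖x‖ < 1 / a := by
  rw [norm_smul, Real.norm_eq_abs, abs_of_pos ha] at h
  rw [lt_div_iff₀ ha]
  linarith

end InnerProductSpace

theorem stmt_10_general (m : ℕ) (c P lam : ℝ) (hc : 0 < c)
    (T : EReal)
    (φ : ℝ → ℝ) (hφdiff : Differentiable ℝ φ)
    (hφc : ∀ t : ℝ, 0 ≤ t → c ≤ φ t)
    (hφ' : ∀ t : ℝ, 0 ≤ t → |deriv φ t| ≤ P)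
    (e : ℝ → EuclideanSpace ℝ (Fin m))
    (hediff : ∀ t : ℝ, 0 ≤ t → (t : EReal) < T → DifferentiableAt ℝ e t)
    (h0 : ‖φ 0 • e 0‖ < 1)
    (hbound : ∀ t : ℝ, 0 ≤ t → (t : EReal) < T → ‖φ t • e t‖ < 1 →
      ‖φ t • deriv e t + (1 - ‖φ t • e t‖ ^ 2)⁻¹ • (φ t • e t)‖ ≤ lam) :
    ∀ t : ℝ, 0 ≤ t → (t : EReal) < T →
      ‖φ t • e t‖ < 1 ∧ ‖e t‖ < 1 / φ t := by
  intro t ht htT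
  have hsT : ∀ s ∈ Icc 0 t, (s : EReal) < T :=
    fun s hs => (EReal.coe_le_coe_iff.2 hs.2).trans_lt htT
  obtain ⟨ρ, ⟨hρ0, hρ1⟩, hρK⟩ :=
    exists_mem_Ico_lt_div_one_sub (lam + P / c) ((sq_lt_one_iff₀ (norm_nonneg _)).2 h0)
  have hinv := norm_sq_le_of_inner_deriv_neg (f := fun s => φ s • e s) (b := t) (ρ := ρ)
    (fun s hs => (hφdiff s).hasDerivAt.smul (hediff s hs.1 (hsT s hs)).hasDerivAt) hρ0
    (fun s hs hs_eq => by
      have he₂ := hbound s hs.1 (hsT s (Ico_subset_Icc_self hs))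
        ((sq_lt_one_iff₀ (norm_nonneg _)).1 (hs_eq ▸ hρ1))
      rw [hs_eq] at he₂
      linarith [inner_smul_add_smul_le hc (hφc s hs.1) (hφ' s hs.1) hs_eq hρ1 he₂])
    t ⟨ht, le_rfl⟩
  have he₁ : ‖φ t • e t‖ < 1 := (sq_lt_one_iff₀ (norm_nonneg _)).1 (hinv.trans_lt hρ1)
  exact ⟨he₁, norm_lt_one_div_of_norm_smul_lt_one (hc.trans_le (hφc t ht)) he₁⟩

/-- Funnel invariance: if the funnel function `φ` is bounded below by `c > 0` with derivative
bounded by `P`, the error `e` is differentiable on `[0, T)`, the initial auxiliary error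
satisfies `‖e₁(0)‖ < 1` with `e₁(t) = φ(t)·e(t)`, and whenever `‖e₁(t)‖ < 1` the second
auxiliary variable `e₂(t) = φ(t)·ė(t) + (1 - ‖e₁(t)‖²)⁻¹ e₁(t)` is bounded by `λ < 1`,
then `‖e₁(t)‖ < 1`, equivalently `‖e(t)‖ < 1/φ(t)`, for all `t ∈ [0, T)`. -/
theorem stmt_10 (m : ℕ) (c P lam : ℝ) (hc : 0 < c) (hP : 0 ≤ P)
    (hlam0 : 0 ≤ lam) (hlam1 : lam < 1)
    (T : EReal) (hT : 0 < T)
    (φ : ℝ → ℝ) (hφdiff : Differentiable ℝ φ)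
    (hφc : ∀ t : ℝ, 0 ≤ t → c ≤ φ t)
    (hφ' : ∀ t : ℝ, 0 ≤ t → |deriv φ t| ≤ P)
    (e : ℝ → EuclideanSpace ℝ (Fin m))
    (hediff : ∀ t : ℝ, 0 ≤ t → (t : EReal) < T → DifferentiableAt ℝ e t)
    (h0 : ‖φ 0 • e 0‖ < 1)
    (hbound : ∀ t : ℝ, 0 ≤ t → (t : EReal) < T → ‖φ t • e t‖ < 1 →
      ‖φ t • deriv e t + (1 - ‖φ t • e t‖ ^ 2)⁻¹ • (φ t • e t)‖ ≤ lam) :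
    ∀ t : ℝ, 0 ≤ t → (t : EReal) < T →
      ‖φ t • e t‖ < 1 ∧ ‖e t‖ < 1 / φ t :=
  stmt_10_general m c P lam hc T φ hφdiff hφc hφ' e hediff h0 hbound
end
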